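/- arXiv:2009.08429 — 3 statements merged into one kernel-verified Lean document; each statement's English description precedes it below -/
import Mathlib

section
/- For the stochastic Lorenz system with γ₁, γ₂ > 0, the vector fields G₁ = √(2γ₁)∂ₓ, G₂ = √(2γ₂)∂_y and the iterated bracket [G₂,[G₁,F]] satisfy [G₂,[G₁,F]] = √(2γ₁)·√(2γ₂)·∂_z, and the three vector fields G₁, G₂, [G₂,[G₁,F]] span ℝ³ at every point. -/
/-- Lie bracket of vector fields on ℝ³ (as functions `Fin 3 → ℝ`). -/
noncomputable def lieBracket (U W : (Fin 3 → ℝ) → (Fin 3 → ℝ)) :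
    (Fin 3 → ℝ) → (Fin 3 → ℝ) :=
  fun p j => ∑ k : Fin 3,
    (U p k * fderiv ℝ (fun q => W q j) p (Pi.single k 1) -
      W p k * fderiv ℝ (fun q => U q j) p (Pi.single k 1))


lemma proj_hd (i : Fin 3) (p : Fin 3 → ℝ) :
    HasFDerivAt (fun q : Fin 3 → ℝ => q i)
      (ContinuousLinearMap.proj i : (Fin 3 → ℝ) →L[ℝ] ℝ) p :=
  (ContinuousLinearMap.proj i : (Fin 3 → ℝ) →L[ℝ] ℝ).hasFDerivAt

lemma inner_bracket (σ ρ β c : ℝ) :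
    lieBracket (fun _ => ![c, 0, 0])
      (fun p => ![σ * (p 1 - p 0), p 0 * (ρ - p 2) - p 1, p 0 * p 1 - β * p 2]) =
    fun p => ![c * (-σ), c * (ρ - p 2), c * p 1] := by
  funext p j
  have h0 : HasFDerivAt (fun q : Fin 3 → ℝ => σ * (q 1 - q 0))
      (σ • ((ContinuousLinearMap.proj 1 : (Fin 3 → ℝ) →L[ℝ] ℝ) - ContinuousLinearMap.proj 0)) p :=
    ((proj_hd 1 p).sub (proj_hd 0 p)).const_mul σ
  have h1 : HasFDerivAt (fun q : Fin 3 → ℝ => q 0 * (ρ - q 2) - q 1)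
      ((p 0 • ((0 : (Fin 3 → ℝ) →L[ℝ] ℝ) - ContinuousLinearMap.proj 2) +
        (ρ - p 2) • ContinuousLinearMap.proj 0) - ContinuousLinearMap.proj 1) p :=
    (((proj_hd 0 p).mul ((hasFDerivAt_const ρ p).sub (proj_hd 2 p)))).sub (proj_hd 1 p)
  have h2 : HasFDerivAt (fun q : Fin 3 → ℝ => q 0 * q 1 - β * q 2)
      ((p 0 • (ContinuousLinearMap.proj 1 : (Fin 3 → ℝ) →L[ℝ] ℝ) +
        p 1 • ContinuousLinearMap.proj 0) - β • ContinuousLinearMap.proj 2) p :=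
    ((proj_hd 0 p).mul (proj_hd 1 p)).sub ((proj_hd 2 p).const_mul β)
  fin_cases j <;>
    simp [lieBracket, Fin.sum_univ_three, h0.fderiv, h1.fderiv, h2.fderiv,
      Pi.single_apply]

lemma outer_bracket (σ ρ β c d : ℝ) :
    lieBracket (fun _ => ![0, d, 0])
      (lieBracket (fun _ => ![c, 0, 0])
        (fun p => ![σ * (p 1 - p 0), p 0 * (ρ - p 2) - p 1, p 0 * p 1 - β * p 2])) =
    fun _ => ![0, 0, c * d] := by
  rw [inner_bracket]
  funext p j
  have h0 : HasFDerivAt (fun _ : Fin 3 → ℝ => c * (-σ)) (0 : (Fin 3 → ℝ) →L[ℝ] ℝ) p :=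
    hasFDerivAt_const _ p
  have h1 : HasFDerivAt (fun q : Fin 3 → ℝ => c * (ρ - q 2))
      (c • ((0 : (Fin 3 → ℝ) →L[ℝ] ℝ) - ContinuousLinearMap.proj 2)) p :=
    ((hasFDerivAt_const ρ p).sub (proj_hd 2 p)).const_mul c
  have h2 : HasFDerivAt (fun q : Fin 3 → ℝ => c * q 1)
      (c • (ContinuousLinearMap.proj 1 : (Fin 3 → ℝ) →L[ℝ] ℝ)) p :=
    (proj_hd 1 p).const_mul c
  fin_cases j <;>
    simp [lieBracket, Fin.sum_univ_three, h0.fderiv, h1.fderiv, h2.fderiv,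
      Pi.single_apply]
  ring

lemma span_lemma (c d : ℝ) (hc : c ≠ 0) (hd : d ≠ 0) :
    Submodule.span ℝ ({![c,0,0], ![0,d,0], ![0,0,c*d]} : Set (Fin 3 → ℝ)) = ⊤ := by
  rw [eq_top_iff]
  intro v _
  have m1 : (![c,0,0] : Fin 3 → ℝ) ∈ Submodule.span ℝ
      ({![c,0,0], ![0,d,0], ![0,0,c*d]} : Set (Fin 3 → ℝ)) :=
    Submodule.subset_span (by simp)
  have m2 : (![0,d,0] : Fin 3 → ℝ) ∈ Submodule.span ℝ
      ({![c,0,0], ![0,d,0], ![0,0,c*d]} : Set (Fin 3 → ℝ)) :=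
    Submodule.subset_span (by simp)
  have m3 : (![0,0,c*d] : Fin 3 → ℝ) ∈ Submodule.span ℝ
      ({![c,0,0], ![0,d,0], ![0,0,c*d]} : Set (Fin 3 → ℝ)) :=
    Submodule.subset_span (by simp)
  have hv : v = (v 0 / c) • ![c,0,0] + (v 1 / d) • ![0,d,0] + (v 2 / (c*d)) • ![0,0,c*d] := by
    funext j
    fin_cases j <;> simp <;> field_simp
  rw [hv]
  exact Submodule.add_mem _ (Submodule.add_mem _ (Submodule.smul_mem _ _ m1)
    (Submodule.smul_mem _ _ m2)) (Submodule.smul_mem _ _ m3)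

/-- for the Lorenz drift `F` and the constant fields
`G₁ = √(2γ₁)∂ₓ`, `G₂ = √(2γ₂)∂_y` with `γ₁, γ₂ > 0`, one has
`[G₂,[G₁,F]] = √(2γ₁)√(2γ₂)∂_z`, and the three vector fields
`G₁, G₂, [G₂,[G₁,F]]` span ℝ³ at every point. -/
theorem bracket_spanning (σ ρ β γ1 γ2 : ℝ) (hγ1 : 0 < γ1) (hγ2 : 0 < γ2) :
    (∀ p : Fin 3 → ℝ,
      lieBracket (fun _ => ![0, Real.sqrt (2 * γ2), 0])
        (lieBracket (fun _ => ![Real.sqrt (2 * γ1), 0, 0])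
          (fun p => ![σ * (p 1 - p 0), p 0 * (ρ - p 2) - p 1,
            p 0 * p 1 - β * p 2])) p =
        ![0, 0, Real.sqrt (2 * γ1) * Real.sqrt (2 * γ2)]) ∧
    ∀ p : Fin 3 → ℝ,
      Submodule.span ℝ
        ({(fun _ : Fin 3 → ℝ => ![Real.sqrt (2 * γ1), 0, 0]) p,
          (fun _ : Fin 3 → ℝ => ![0, Real.sqrt (2 * γ2), 0]) p,
          lieBracket (fun _ => ![0, Real.sqrt (2 * γ2), 0])
            (lieBracket (fun _ => ![Real.sqrt (2 * γ1), 0, 0])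
              (fun p => ![σ * (p 1 - p 0), p 0 * (ρ - p 2) - p 1,
                p 0 * p 1 - β * p 2])) p} : Set (Fin 3 → ℝ)) = ⊤ := by
  have hc : Real.sqrt (2 * γ1) ≠ 0 :=
    ne_of_gt (Real.sqrt_pos.2 (by linarith))
  have hd : Real.sqrt (2 * γ2) ≠ 0 :=
    ne_of_gt (Real.sqrt_pos.2 (by linarith))
  have hb := outer_bracket σ ρ β (Real.sqrt (2 * γ1)) (Real.sqrt (2 * γ2))
  constructor
  · intro p
    rw [hb]
  · intro p
    simp only [hb]
    exact span_lemma _ _ hc hd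
end

section
/- If μ is an invariant probability measure for the stochastic Lorenz system with β = γ₁ = 0 and ∫|X|²dμ < ∞, then the x-marginal satisfies x = 0 μ-almost surely. Concretely: stationarity together with Itô's formula applied to M(x,y,z) = 2σz − x² yields ∫ x² dμ = 0. -/
/-!
For `M = 2σz − x²` one has `L M = 2σx²`: the cubic terms of the Lorenz drift cancel, and `M` is
affine in the noisy directions `y, z`, so the noise does not see it. Invariance applied to `M`
would give `2σ ∫ x² dμ = 0`. Since `M` is unbounded we apply it to `χ(|p|²/m) M` instead, with `χ`
a smooth cutoff equal to `1` on `(-∞, 1]` and to `0` on `[4, ∞)`. The error terms live on the shell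
`m ≤ |p|² ≤ 4m`, where `L(|p|²/m)` (quadratic, again by the cubic cancellation, divided by `m`)
and the derivatives `2y/m`, `2z/m` are bounded, while `M = O(|p|²)`. So `L(χ(|p|²/m) M)` is
dominated by `C|p|²` uniformly in `m ≥ 1` and equals `2σx²` once `m > |p|²`; dominated convergence
gives `∫ 2σx² dμ = 0`.
-/

open MeasureTheory

/-- Generator of the stochastic Lorenz system with `β = 0`, `γ₁ = 0`,
acting on functions of `(x,y,z) ∈ ℝ × ℝ × ℝ`:
`L f = σ(y−x)∂ₓf + (x(ρ−z)−y)∂_y f + xy ∂_z f + γ₂∂_y²f + γ₃∂_z²f`. -/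
noncomputable def lorenzGenDeg (σ ρ γ2 γ3 : ℝ) (f : ℝ × ℝ × ℝ → ℝ)
    (p : ℝ × ℝ × ℝ) : ℝ :=
  σ * (p.2.1 - p.1) * deriv (fun t => f (t, p.2.1, p.2.2)) p.1 +
    (p.1 * (ρ - p.2.2) - p.2.1) * deriv (fun t => f (p.1, t, p.2.2)) p.2.1 +
    p.1 * p.2.1 * deriv (fun t => f (p.1, p.2.1, t)) p.2.2 +
    γ2 * deriv (fun t => deriv (fun s => f (p.1, s, p.2.2)) t) p.2.1 +
    γ3 * deriv (fun t => deriv (fun s => f (p.1, p.2.1, s)) t) p.2.2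

open Set Function Filter Topology
open scoped ContDiff

noncomputable def smoothCutoff (s : ℝ) : ℝ := Real.smoothTransition ((4 - s) / 3)

namespace smoothCutoff

theorem contDiff : ContDiff ℝ ∞ smoothCutoff :=
  Real.smoothTransition.contDiff.comp ((contDiff_const.sub contDiff_id).div_const 3)

theorem eq_one {s : ℝ} (h : s ≤ 1) : smoothCutoff s = 1 :=
  Real.smoothTransition.one_of_one_le (by linarith)

theorem eq_zero {s : ℝ} (h : 4 ≤ s) : smoothCutoff s = 0 :=
  Real.smoothTransition.zero_of_nonpos (by linarith)

theorem norm_le_one (s : ℝ) : ‖smoothCutoff s‖ ≤ 1 :=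
  abs_le.2 ⟨(neg_nonpos.2 zero_le_one).trans (Real.smoothTransition.nonneg _),
    Real.smoothTransition.le_one _⟩

theorem differentiable : Differentiable ℝ smoothCutoff := contDiff.differentiable (by simp)

theorem contDiff_deriv : ContDiff ℝ ∞ (deriv smoothCutoff) :=
  (contDiff_infty_iff_deriv.1 contDiff).2

theorem differentiable_deriv : Differentiable ℝ (deriv smoothCutoff) :=
  contDiff_deriv.differentiable (by simp)

theorem continuous_deriv_deriv : Continuous (deriv (deriv smoothCutoff)) :=
  (contDiff_infty_iff_deriv.1 contDiff_deriv).2.continuous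

theorem support_deriv_subset : support (deriv smoothCutoff) ⊆ Icc 1 4 := by
  intro s hs
  by_contra hs'
  refine hs ?_
  rcases not_and_or.1 hs' with h | h
  · have : smoothCutoff =ᶠ[𝓝 s] fun _ => 1 := by
      filter_upwards [Iio_mem_nhds (not_le.1 h)] with t ht using eq_one ht.le
    rw [this.deriv_eq, deriv_const]
  · have : smoothCutoff =ᶠ[𝓝 s] fun _ => 0 := by
      filter_upwards [Ioi_mem_nhds (not_le.1 h)] with t ht using eq_zero ht.le
    rw [this.deriv_eq, deriv_const]

theorem support_deriv_deriv_subset : support (deriv (deriv smoothCutoff)) ⊆ Icc 1 4 :=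
  _root_.support_deriv_subset.trans (closure_minimal support_deriv_subset isClosed_Icc)

theorem deriv_eq_zero_of_notMem {s : ℝ} (hs : s ∉ Icc 1 4) :
    deriv smoothCutoff s = 0 ∧ deriv (deriv smoothCutoff) s = 0 :=
  ⟨notMem_support.1 fun h => hs (support_deriv_subset h),
    notMem_support.1 fun h => hs (support_deriv_deriv_subset h)⟩

theorem exists_norm_deriv_le :
    ∃ K, ∀ s, ‖deriv smoothCutoff s‖ ≤ K ∧ ‖deriv (deriv smoothCutoff) s‖ ≤ K := by
  have hIcc : IsCompact (Icc (1 : ℝ) 4) := isCompact_Icc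
  obtain ⟨K₁, hK₁⟩ := differentiable_deriv.continuous.bounded_above_of_compact_support
    (HasCompactSupport.intro hIcc fun s hs => (deriv_eq_zero_of_notMem hs).1)
  obtain ⟨K₂, hK₂⟩ := continuous_deriv_deriv.bounded_above_of_compact_support
    (HasCompactSupport.intro hIcc fun s hs => (deriv_eq_zero_of_notMem hs).2)
  exact ⟨max K₁ K₂, fun s => ⟨(hK₁ s).trans (le_max_left _ _), (hK₂ s).trans (le_max_right _ _)⟩⟩

end smoothCutoff

/-- The Euclidean `|p|²`; note that `‖p‖` is the sup norm on `ℝ × ℝ × ℝ`. -/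
def euclidNormSq (p : ℝ × ℝ × ℝ) : ℝ := p.1 ^ 2 + p.2.1 ^ 2 + p.2.2 ^ 2

theorem euclidNormSq_nonneg (p : ℝ × ℝ × ℝ) : 0 ≤ euclidNormSq p := by
  unfold euclidNormSq; positivity

theorem continuous_euclidNormSq : Continuous euclidNormSq := by
  unfold euclidNormSq; fun_prop

theorem sq_coords_le_euclidNormSq (p : ℝ × ℝ × ℝ) :
    p.1 ^ 2 ≤ euclidNormSq p ∧ p.2.1 ^ 2 ≤ euclidNormSq p ∧ p.2.2 ^ 2 ≤ euclidNormSq p := by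
  unfold euclidNormSq
  refine ⟨?_, ?_, ?_⟩ <;> nlinarith [sq_nonneg p.1, sq_nonneg p.2.1, sq_nonneg p.2.2]

theorem euclidNormSq_le_three_mul_norm_sq (p : ℝ × ℝ × ℝ) : euclidNormSq p ≤ 3 * ‖p‖ ^ 2 := by
  have h (a : ℝ) (ha : ‖a‖ ≤ ‖p‖) : a ^ 2 ≤ ‖p‖ ^ 2 := by
    simpa using pow_le_pow_left₀ (norm_nonneg a) ha 2
  have := h _ (norm_fst_le p)
  have := h _ ((norm_fst_le p.2).trans (norm_snd_le p))
  have := h _ ((norm_snd_le p.2).trans (norm_snd_le p))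
  unfold euclidNormSq
  linarith

theorem norm_le_sqrt_euclidNormSq (p : ℝ × ℝ × ℝ) : ‖p‖ ≤ √(euclidNormSq p) := by
  obtain ⟨hx, hy, hz⟩ := sq_coords_le_euclidNormSq p
  exact norm_prod_le_iff.2
    ⟨Real.abs_le_sqrt hx, norm_prod_le_iff.2 ⟨Real.abs_le_sqrt hy, Real.abs_le_sqrt hz⟩⟩

theorem integrable_euclidNormSq {μ : Measure (ℝ × ℝ × ℝ)}
    (hμ : Integrable (fun p : ℝ × ℝ × ℝ => ‖p‖ ^ 2) μ) : Integrable euclidNormSq μ :=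
  (hμ.const_mul 3).mono' continuous_euclidNormSq.aestronglyMeasurable
    (ae_of_all _ fun p => by
      rw [Real.norm_of_nonneg (euclidNormSq_nonneg p)]
      exact euclidNormSq_le_three_mul_norm_sq p)

def lorenzLyap (σ : ℝ) (p : ℝ × ℝ × ℝ) : ℝ := 2 * σ * p.2.2 - p.1 ^ 2

noncomputable def truncLyap (σ m : ℝ) (p : ℝ × ℝ × ℝ) : ℝ :=
  smoothCutoff (euclidNormSq p / m) * lorenzLyap σ p

theorem contDiff_truncLyap (σ m : ℝ) : ContDiff ℝ 2 (truncLyap σ m) := by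
  have := smoothCutoff.contDiff.of_le (m := 2) (by decide)
  unfold truncLyap euclidNormSq lorenzLyap
  fun_prop

theorem hasCompactSupport_truncLyap (σ : ℝ) {m : ℝ} (hm : 0 < m) :
    HasCompactSupport (truncLyap σ m) := by
  refine HasCompactSupport.intro (isCompact_closedBall 0 √(4 * m)) fun p hp => ?_
  have h4 : 4 ≤ euclidNormSq p / m := by
    rw [le_div_iff₀ hm]
    by_contra! h
    exact hp (mem_closedBall_zero_iff.2 ((norm_le_sqrt_euclidNormSq p).trans
      (Real.sqrt_le_sqrt (by linarith))))
  simp only [truncLyap, smoothCutoff.eq_zero h4, zero_mul]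

theorem hasDerivAt_comp_mul {ψ v q : ℝ → ℝ} {v' q' t : ℝ} (hψ : DifferentiableAt ℝ ψ (v t))
    (hv : HasDerivAt v v' t) (hq : HasDerivAt q q' t) :
    HasDerivAt (fun s => ψ (v s) * q s) (deriv ψ (v t) * v' * q t + ψ (v t) * q') t :=
  (hψ.hasDerivAt.comp t hv).mul hq

theorem deriv_deriv_comp_mul {ψ v q : ℝ → ℝ} {k b : ℝ} (hψ : Differentiable ℝ ψ)
    (hψ' : Differentiable ℝ (deriv ψ)) (hv : ∀ s, HasDerivAt v (k * s) s)
    (hq : ∀ s, HasDerivAt q b s) (t : ℝ) :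
    deriv (deriv fun s => ψ (v s) * q s) t =
      deriv (deriv ψ) (v t) * (k * t) ^ 2 * q t + deriv ψ (v t) * k * q t +
        2 * deriv ψ (v t) * (k * t) * b := by
  have hd : deriv (fun s => ψ (v s) * q s) =
      fun s => deriv ψ (v s) * (k * s * q s) + ψ (v s) * b :=
    funext fun s => by rw [(hasDerivAt_comp_mul (hψ _) (hv s) (hq s)).deriv]; ring
  have hkq : HasDerivAt (fun s => k * s * q s) (k * q t + k * t * b) t :=
    (((hasDerivAt_id' t).const_mul k).mul (hq t)).congr_deriv (by ring)
  rw [hd]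
  refine ((hasDerivAt_comp_mul (hψ' _) (hv t) hkq).add
    (hasDerivAt_comp_mul (hψ _) (hv t) (hasDerivAt_const t b))).deriv.trans ?_
  ring

/-- Product and chain rule for `L (χ(w) M)` with `w = |p|²/m`: the terms are `χ(w) L M`,
`χ'(w) (L w) M`, `χ''(w) (γ₂ (∂_y w)² + γ₃ (∂_z w)²) M` and `2γ₃ χ'(w) ∂_z w ∂_z M`. -/
theorem lorenzGenDeg_truncLyap (σ ρ γ2 γ3 m : ℝ) (p : ℝ × ℝ × ℝ) :
    lorenzGenDeg σ ρ γ2 γ3 (truncLyap σ m) p =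
      smoothCutoff (euclidNormSq p / m) * (2 * σ * p.1 ^ 2) +
      deriv smoothCutoff (euclidNormSq p / m) *
        (2 / m * (σ * p.1 * p.2.1 - σ * p.1 ^ 2 + ρ * p.1 * p.2.1 - p.2.1 ^ 2 + γ2 + γ3)) *
        lorenzLyap σ p +
      deriv (deriv smoothCutoff) (euclidNormSq p / m) *
        (γ2 * (2 / m * p.2.1) ^ 2 + γ3 * (2 / m * p.2.2) ^ 2) * lorenzLyap σ p +
      2 * γ3 * deriv smoothCutoff (euclidNormSq p / m) * (2 / m * p.2.2) * (2 * σ) := by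
  obtain ⟨x, y, z⟩ := p
  have hsq (t : ℝ) : HasDerivAt (fun s => s ^ 2) (2 * t) t := by simpa using hasDerivAt_pow 2 t
  have hVx : HasDerivAt (fun s => euclidNormSq (s, y, z) / m) (2 / m * x) x :=
    ((((hsq x).add_const (y ^ 2)).add_const (z ^ 2)).div_const m).congr_deriv (by ring)
  have hVy (t : ℝ) : HasDerivAt (fun s => euclidNormSq (x, s, z) / m) (2 / m * t) t :=
    ((((hsq t).const_add (x ^ 2)).add_const (z ^ 2)).div_const m).congr_deriv (by ring)
  have hVz (t : ℝ) : HasDerivAt (fun s => euclidNormSq (x, y, s) / m) (2 / m * t) t :=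
    (((hsq t).const_add (x ^ 2 + y ^ 2)).div_const m).congr_deriv (by ring)
  have hMx : HasDerivAt (fun s => lorenzLyap σ (s, y, z)) (-(2 * x)) x :=
    (hsq x).const_sub (2 * σ * z)
  have hMy (t : ℝ) : HasDerivAt (fun s => lorenzLyap σ (x, s, z)) 0 t :=
    hasDerivAt_const t (2 * σ * z - x ^ 2)
  have hMz (t : ℝ) : HasDerivAt (fun s => lorenzLyap σ (x, y, s)) (2 * σ) t :=
    (((hasDerivAt_id' t).const_mul (2 * σ)).sub_const (x ^ 2)).congr_deriv (by ring)
  have hχ := smoothCutoff.differentiable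
  simp only [lorenzGenDeg, truncLyap]
  rw [(hasDerivAt_comp_mul (hχ _) hVx hMx).deriv,
    (hasDerivAt_comp_mul (hχ _) (hVy y) (hMy y)).deriv,
    (hasDerivAt_comp_mul (hχ _) (hVz z) (hMz z)).deriv,
    deriv_deriv_comp_mul hχ smoothCutoff.differentiable_deriv hVy hMy,
    deriv_deriv_comp_mul hχ smoothCutoff.differentiable_deriv hVz hMz]
  simp only [lorenzLyap, euclidNormSq]
  ring

theorem lorenzGenDeg_truncLyap_of_lt {σ ρ γ2 γ3 m : ℝ} (hm : 0 < m) {p : ℝ × ℝ × ℝ}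
    (hp : euclidNormSq p < m) :
    lorenzGenDeg σ ρ γ2 γ3 (truncLyap σ m) p = 2 * σ * p.1 ^ 2 := by
  have hw : euclidNormSq p / m < 1 := (div_lt_one hm).2 hp
  obtain ⟨h₁, h₂⟩ := smoothCutoff.deriv_eq_zero_of_notMem fun h => hw.not_ge h.1
  rw [lorenzGenDeg_truncLyap, smoothCutoff.eq_one hw.le, h₁, h₂]
  ring

theorem tendsto_lorenzGenDeg_truncLyap (σ ρ γ2 γ3 : ℝ) (p : ℝ × ℝ × ℝ) :
    Tendsto (fun n : ℕ => lorenzGenDeg σ ρ γ2 γ3 (truncLyap σ (n + 1)) p) atTop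
      (𝓝 (2 * σ * p.1 ^ 2)) :=
  tendsto_atTop_of_eventually_const (i₀ := ⌊euclidNormSq p⌋₊) fun n hn =>
    lorenzGenDeg_truncLyap_of_lt (by positivity) <|
      (Nat.lt_floor_add_one _).trans_le (by exact_mod_cast Nat.add_le_add_right hn 1)

theorem continuous_lorenzGenDeg_truncLyap (σ ρ γ2 γ3 m : ℝ) :
    Continuous (lorenzGenDeg σ ρ γ2 γ3 (truncLyap σ m)) := by
  have hw : Continuous fun p => euclidNormSq p / m := continuous_euclidNormSq.div_const m
  have := smoothCutoff.differentiable.continuous.comp hw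
  have := smoothCutoff.differentiable_deriv.continuous.comp hw
  have := smoothCutoff.continuous_deriv_deriv.comp hw
  rw [funext (lorenzGenDeg_truncLyap σ ρ γ2 γ3 m)]
  unfold lorenzLyap
  fun_prop

theorem norm_two_mul_mul_sq_fst_le (σ : ℝ) (p : ℝ × ℝ × ℝ) :
    ‖2 * σ * p.1 ^ 2‖ ≤ 2 * ‖σ‖ * euclidNormSq p :=
  norm_mul_le_of_le (by rw [norm_mul, Real.norm_two])
    (by simpa using (sq_coords_le_euclidNormSq p).1)

theorem norm_lorenzLyap_le (σ : ℝ) {p : ℝ × ℝ × ℝ} (hp : 1 ≤ euclidNormSq p) :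
    ‖lorenzLyap σ p‖ ≤ (2 * ‖σ‖ + 1) * euclidNormSq p := by
  obtain ⟨hx, -, hz⟩ := sq_coords_le_euclidNormSq p
  have hz' : ‖p.2.2‖ ≤ euclidNormSq p := by
    rw [Real.norm_eq_abs]; nlinarith [sq_abs p.2.2, sq_nonneg (|p.2.2| - 1)]
  calc ‖lorenzLyap σ p‖ ≤ ‖2 * σ * p.2.2‖ + ‖p.1 ^ 2‖ := norm_sub_le _ _
    _ ≤ 2 * ‖σ‖ * euclidNormSq p + euclidNormSq p :=
      add_le_add (norm_mul_le_of_le (by rw [norm_mul, Real.norm_two]) hz') (by simpa using hx)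
    _ = (2 * ‖σ‖ + 1) * euclidNormSq p := by ring

theorem norm_energyRate_le (σ ρ γ2 γ3 : ℝ) {p : ℝ × ℝ × ℝ} (hp : 1 ≤ euclidNormSq p) :
    ‖σ * p.1 * p.2.1 - σ * p.1 ^ 2 + ρ * p.1 * p.2.1 - p.2.1 ^ 2 + γ2 + γ3‖ ≤
      (2 * ‖σ‖ + ‖ρ‖ + ‖γ2‖ + ‖γ3‖ + 1) * euclidNormSq p := by
  obtain ⟨hx, hy, -⟩ := sq_coords_le_euclidNormSq p
  have hxy : ‖p.1 * p.2.1‖ ≤ euclidNormSq p := by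
    rw [norm_mul, Real.norm_eq_abs, Real.norm_eq_abs]
    nlinarith [sq_abs p.1, sq_abs p.2.1, sq_nonneg (|p.1| - |p.2.1|)]
  have h₁ := abs_le.1 (norm_mul_le_of_le le_rfl hxy : ‖σ * (p.1 * p.2.1)‖ ≤ _)
  have h₂ := abs_le.1 (norm_mul_le_of_le le_rfl (by simpa using hx) : ‖σ * p.1 ^ 2‖ ≤ _)
  have h₃ := abs_le.1 (norm_mul_le_of_le le_rfl hxy : ‖ρ * (p.1 * p.2.1)‖ ≤ _)
  have h₄ := abs_le.1 (le_mul_of_one_le_right (norm_nonneg γ2) hp)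
  have h₅ := abs_le.1 (le_mul_of_one_le_right (norm_nonneg γ3) hp)
  simp only [Real.norm_eq_abs] at h₁ h₂ h₃ ⊢
  rw [abs_le]
  constructor <;> linarith [sq_nonneg p.2.1]

theorem norm_two_div_mul_le_four {m u : ℝ} (hm : 1 ≤ m) (hu : u ^ 2 ≤ 4 * m) :
    ‖2 / m * u‖ ≤ 4 := by
  rw [Real.norm_eq_abs]
  refine abs_le_of_sq_le_sq ?_ (by norm_num)
  calc (2 / m * u) ^ 2 = 4 * u ^ 2 / m ^ 2 := by ring
    _ ≤ 4 ^ 2 := by rw [div_le_iff₀ (by positivity)]; nlinarith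

section Bounds

variable {σ ρ γ2 γ3 K A m : ℝ}

theorem norm_lorenzGenDeg_truncLyap_le_of_mem_Icc
    (hK : ∀ s, ‖deriv smoothCutoff s‖ ≤ K ∧ ‖deriv (deriv smoothCutoff) s‖ ≤ K)
    (hA : 2 * ‖σ‖ + ‖ρ‖ + ‖γ2‖ + ‖γ3‖ + 1 ≤ A) (hm : 1 ≤ m) {p : ℝ × ℝ × ℝ}
    (hp : euclidNormSq p / m ∈ Icc 1 4) :
    ‖lorenzGenDeg σ ρ γ2 γ3 (truncLyap σ m) p‖ ≤ (A + 32 * K * A ^ 2) * euclidNormSq p := by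
  have hm0 : 0 < m := by linarith
  have hmV : m ≤ euclidNormSq p := by simpa using (le_div_iff₀ hm0).1 hp.1
  have hV4 : euclidNormSq p ≤ 4 * m := (div_le_iff₀ hm0).1 hp.2
  have hV1 : 1 ≤ euclidNormSq p := hm.trans hmV
  have hK0 : 0 ≤ K := (norm_nonneg _).trans (hK 0).1
  have := norm_nonneg σ; have := norm_nonneg ρ; have := norm_nonneg γ2; have := norm_nonneg γ3
  obtain ⟨hx, hy, hz⟩ := sq_coords_le_euclidNormSq p
  have hleading : ‖2 * σ * p.1 ^ 2‖ ≤ A * euclidNormSq p :=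
    (norm_two_mul_mul_sq_fst_le σ p).trans (by gcongr; linarith)
  have hM : ‖lorenzLyap σ p‖ ≤ A * euclidNormSq p :=
    (norm_lorenzLyap_le σ hV1).trans (by gcongr; linarith)
  have hLw : ‖2 / m * (σ * p.1 * p.2.1 - σ * p.1 ^ 2 + ρ * p.1 * p.2.1 - p.2.1 ^ 2 + γ2 + γ3)‖
      ≤ 8 * A := by
    rw [norm_mul, Real.norm_of_nonneg (by positivity)]
    calc _ ≤ 2 / m * (A * (4 * m)) := by
          gcongr
          exact (norm_energyRate_le σ ρ γ2 γ3 hV1).trans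
            (mul_le_mul hA hV4 (by linarith) (by linarith))
      _ = 8 * A := by field_simp; ring
  have hz4 : ‖2 / m * p.2.2‖ ≤ 4 := norm_two_div_mul_le_four hm (hz.trans hV4)
  have hΓw : ‖γ2 * (2 / m * p.2.1) ^ 2 + γ3 * (2 / m * p.2.2) ^ 2‖ ≤ 16 * A := by
    have hsq {u : ℝ} (hu : ‖2 / m * u‖ ≤ 4) : ‖(2 / m * u) ^ 2‖ ≤ 16 := by
      rw [norm_pow]; nlinarith [norm_nonneg (2 / m * u)]
    have := add_le_add
      (norm_mul_le_of_le (le_refl ‖γ2‖) (hsq (norm_two_div_mul_le_four hm (hy.trans hV4))))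
      (norm_mul_le_of_le (le_refl ‖γ3‖) (hsq hz4))
    linarith [norm_add_le (γ2 * (2 / m * p.2.1) ^ 2) (γ3 * (2 / m * p.2.2) ^ 2)]
  have h2σ : ‖2 * σ‖ ≤ A := by rw [norm_mul, Real.norm_two]; linarith
  have h2γ3 : ‖2 * γ3‖ ≤ 2 * A := by rw [norm_mul, Real.norm_two]; linarith
  have hKA : K * A ^ 2 ≤ K * A ^ 2 * euclidNormSq p := le_mul_of_one_le_right (by positivity) hV1
  set w := euclidNormSq p / m
  rw [lorenzGenDeg_truncLyap]
  refine norm_add₄_le.trans ?_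
  have := add_le_add (add_le_add (add_le_add
    (norm_mul_le_of_le (smoothCutoff.norm_le_one w) hleading)
    (norm_mul_le_of_le (norm_mul_le_of_le (hK w).1 hLw) hM))
    (norm_mul_le_of_le (norm_mul_le_of_le (hK w).2 hΓw) hM))
    (norm_mul_le_of_le (norm_mul_le_of_le (norm_mul_le_of_le h2γ3 (hK w).1) hz4) h2σ)
  nlinarith

theorem norm_lorenzGenDeg_truncLyap_le
    (hK : ∀ s, ‖deriv smoothCutoff s‖ ≤ K ∧ ‖deriv (deriv smoothCutoff) s‖ ≤ K)
    (hA : 2 * ‖σ‖ + ‖ρ‖ + ‖γ2‖ + ‖γ3‖ + 1 ≤ A) (hm : 1 ≤ m) (p : ℝ × ℝ × ℝ) :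
    ‖lorenzGenDeg σ ρ γ2 γ3 (truncLyap σ m) p‖ ≤ (A + 32 * K * A ^ 2) * euclidNormSq p := by
  by_cases hp : euclidNormSq p / m ∈ Icc 1 4
  · exact norm_lorenzGenDeg_truncLyap_le_of_mem_Icc hK hA hm hp
  obtain ⟨h₁, h₂⟩ := smoothCutoff.deriv_eq_zero_of_notMem hp
  have hKA : 0 ≤ 32 * K * A ^ 2 * euclidNormSq p :=
    mul_nonneg (by have := (norm_nonneg _).trans (hK 0).1; positivity) (euclidNormSq_nonneg p)
  have hσA : 2 * ‖σ‖ ≤ A := by linarith [norm_nonneg ρ, norm_nonneg γ2, norm_nonneg γ3]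
  rw [lorenzGenDeg_truncLyap, h₁, h₂]
  simp only [zero_mul, mul_zero, add_zero]
  calc _ ≤ 1 * (2 * ‖σ‖ * euclidNormSq p) :=
        norm_mul_le_of_le (smoothCutoff.norm_le_one _) (norm_two_mul_mul_sq_fst_le σ p)
    _ ≤ (A + 32 * K * A ^ 2) * euclidNormSq p := by
        nlinarith [mul_le_mul_of_nonneg_right hσA (euclidNormSq_nonneg p)]

end Bounds

theorem no_invariant_measure_degenerate_noise_general
    (σ ρ γ2 γ3 : ℝ) (hσ : 0 < σ)
    (μ : Measure (ℝ × ℝ × ℝ))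
    (hmom : Integrable (fun p : ℝ × ℝ × ℝ => ‖p‖ ^ 2) μ)
    (hinv : ∀ f : ℝ × ℝ × ℝ → ℝ, ContDiff ℝ 2 f → HasCompactSupport f →
      ∫ p, lorenzGenDeg σ ρ γ2 γ3 f p ∂μ = 0) :
    (∫ p : ℝ × ℝ × ℝ, p.1 ^ 2 ∂μ) = 0 ∧ ∀ᵐ p : ℝ × ℝ × ℝ ∂μ, p.1 = 0 := by
  obtain ⟨K, hK⟩ := smoothCutoff.exists_norm_deriv_le
  set A := 2 * ‖σ‖ + ‖ρ‖ + ‖γ2‖ + ‖γ3‖ + 1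
  have hV := integrable_euclidNormSq hmom
  have hlim : Tendsto (fun n : ℕ => ∫ p, lorenzGenDeg σ ρ γ2 γ3 (truncLyap σ (n + 1)) p ∂μ)
      atTop (𝓝 (∫ p, 2 * σ * p.1 ^ 2 ∂μ)) :=
    tendsto_integral_of_dominated_convergence (fun p => (A + 32 * K * A ^ 2) * euclidNormSq p)
      (fun n => (continuous_lorenzGenDeg_truncLyap σ ρ γ2 γ3 _).aestronglyMeasurable)
      (hV.const_mul _)
      (fun n => ae_of_all _ (norm_lorenzGenDeg_truncLyap_le hK le_rfl (by simp)))
      (ae_of_all _ (tendsto_lorenzGenDeg_truncLyap σ ρ γ2 γ3))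
  have hLyap : ∫ p, 2 * σ * p.1 ^ 2 ∂μ = 0 :=
    tendsto_nhds_unique hlim <| tendsto_const_nhds.congr fun n => (hinv _
      (contDiff_truncLyap σ _) (hasCompactSupport_truncLyap σ (by positivity))).symm
  have hsq : ∫ p, p.1 ^ 2 ∂μ = 0 := by
    rw [integral_const_mul, mul_eq_zero] at hLyap
    exact hLyap.resolve_left (by positivity)
  have hsq_int : Integrable (fun p : ℝ × ℝ × ℝ => p.1 ^ 2) μ :=
    hV.mono' (continuous_fst.pow 2).aestronglyMeasurable (ae_of_all _ fun p => by
      simpa using (sq_coords_le_euclidNormSq p).1)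
  refine ⟨hsq, ?_⟩
  filter_upwards [(integral_eq_zero_iff_of_nonneg (fun p => sq_nonneg p.1) hsq_int).1 hsq]
    with p hp using pow_eq_zero_iff two_ne_zero |>.1 hp

/-- if `μ` is an invariant probability measure for the stochastic
Lorenz system with `β = γ₁ = 0` (invariance expressed as `∫ Lf dμ = 0` for all
`C²` compactly supported `f`) with `∫ |X|² dμ < ∞`, then `∫ x² dμ = 0`, i.e.
`x = 0` μ-almost surely. -/
theorem no_invariant_measure_degenerate_noise
    (σ ρ γ2 γ3 : ℝ) (hσ : 0 < σ) (hγ2 : 0 ≤ γ2) (hγ3 : 0 ≤ γ3)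
    (μ : Measure (ℝ × ℝ × ℝ)) (hμ : IsProbabilityMeasure μ)
    (hmom : Integrable (fun p : ℝ × ℝ × ℝ => ‖p‖ ^ 2) μ)
    (hinv : ∀ f : ℝ × ℝ × ℝ → ℝ, ContDiff ℝ 2 f → HasCompactSupport f →
      ∫ p, lorenzGenDeg σ ρ γ2 γ3 f p ∂μ = 0) :
    (∫ p : ℝ × ℝ × ℝ, p.1 ^ 2 ∂μ) = 0 ∧ ∀ᵐ p : ℝ × ℝ × ℝ ∂μ, p.1 = 0 :=
  no_invariant_measure_degenerate_noise_general σ ρ γ2 γ3 hσ μ hmom hinv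
end

section
/- Let H(x,y,z) = x² + y² + z² − 2(σ+ρ)z and W₂ = ln H on the region where H > 1. Then for the generator L of the stochastic Lorenz system with β < 0, LW₂ = [2|β|z² − 2y² − 2σx² − 2|β|(σ+ρ)z + 2(γ₁+γ₂+γ₃)]/H − 4[x²γ₁ + y²γ₂ + (z−(σ+ρ))²γ₃]/H², and there exists a constant K > 0 such that LW₂(x,y,z) ≤ K for all (x,y,z) in the region where H > 1. -/
noncomputable def dX (f : ℝ → ℝ → ℝ → ℝ) : ℝ → ℝ → ℝ → ℝ :=
  fun x y z => deriv (fun t => f t y z) x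

noncomputable def dY (f : ℝ → ℝ → ℝ → ℝ) : ℝ → ℝ → ℝ → ℝ :=
  fun x y z => deriv (fun t => f x t z) y

noncomputable def dZ (f : ℝ → ℝ → ℝ → ℝ) : ℝ → ℝ → ℝ → ℝ :=
  fun x y z => deriv (fun t => f x y t) z

/-- The generator of the stochastic Lorenz system. -/
noncomputable def lorenzGen (σ ρ β γ1 γ2 γ3 : ℝ) (f : ℝ → ℝ → ℝ → ℝ)
    (x y z : ℝ) : ℝ :=
  σ * (y - x) * dX f x y z + (x * (ρ - z) - y) * dY f x y z +
    (x * y - β * z) * dZ f x y z +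
    γ1 * dX (dX f) x y z + γ2 * dY (dY f) x y z + γ3 * dZ (dZ f) x y z

/-!
Every coordinate slice of `H = x² + y² + z² - 2cz` (with `c = σ + ρ`) is a monic quadratic
`t ↦ (t - m)² + k`, so `∂ log H = 2(t - m)/H` and `∂² log H = 2/H - 4(t - m)²/H²`.
In the drift part the terms `xy` and `xyz` cancel, which leaves the quadratic numerator of
the formula. For the bound, the diffusion correction `-4(⋯)/H²` is nonpositive, and the
numerator is at most `4|β| H + const` since `z² - cz ≤ 2(z² - 2cz) + 9c²/4`; as `H > 1`,
dividing by `H` gives a constant.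
-/

open Real

section LogOfMonicQuadratic

variable {q : ℝ → ℝ} {m k : ℝ}

theorem hasDerivAt_of_eq_sub_sq_add (hq : ∀ s, q s = (s - m) ^ 2 + k) (t : ℝ) :
    HasDerivAt q (2 * (t - m)) t := by
  rw [funext hq]
  simpa using (((hasDerivAt_id t).sub_const m).pow 2).add_const k

variable {t : ℝ}

theorem deriv_log_of_eq_sub_sq_add (hq : ∀ s, q s = (s - m) ^ 2 + k) (ht : 0 < q t) :
    deriv (fun s => log (q s)) t = 2 * (t - m) / q t :=
  ((hasDerivAt_of_eq_sub_sq_add hq t).log ht.ne').deriv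

theorem deriv_deriv_log_of_eq_sub_sq_add (hq : ∀ s, q s = (s - m) ^ 2 + k) (ht : 0 < q t) :
    deriv (deriv fun s => log (q s)) t = 2 / q t - 4 * (t - m) ^ 2 / q t ^ 2 := by
  have hcont : Continuous q := by rw [funext hq]; fun_prop
  have hpos : ∀ᶠ s in nhds t, 0 < q s := hcont.continuousAt.eventually (eventually_gt_nhds ht)
  have hderiv : deriv (fun s => log (q s)) =ᶠ[nhds t] fun s => 2 * (s - m) / q s :=
    hpos.mono fun s hs => deriv_log_of_eq_sub_sq_add hq hs
  have hquot : HasDerivAt (fun s => 2 * (s - m) / q s)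
      ((2 * q t - 2 * (t - m) * (2 * (t - m))) / q t ^ 2) t := by
    have hlin : HasDerivAt (fun s => 2 * (s - m)) 2 t := by
      simpa using ((hasDerivAt_id t).sub_const m).const_mul 2
    exact hlin.div (hasDerivAt_of_eq_sub_sq_add hq t) ht.ne'
  rw [hderiv.deriv_eq, hquot.deriv]
  field_simp
  ring

end LogOfMonicQuadratic

def lorenzH (c x y z : ℝ) : ℝ := x ^ 2 + y ^ 2 + z ^ 2 - 2 * c * z

section LogLorenzH

variable {c x y z : ℝ}

theorem lorenzH_eq_x_sq (c y z s : ℝ) :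
    lorenzH c s y z = (s - 0) ^ 2 + (y ^ 2 + z ^ 2 - 2 * c * z) := by
  rw [lorenzH]; ring

theorem lorenzH_eq_y_sq (c x z s : ℝ) :
    lorenzH c x s z = (s - 0) ^ 2 + (x ^ 2 + z ^ 2 - 2 * c * z) := by
  rw [lorenzH]; ring

theorem lorenzH_eq_z_sub_sq (c x y s : ℝ) :
    lorenzH c x y s = (s - c) ^ 2 + (x ^ 2 + y ^ 2 - c ^ 2) := by
  rw [lorenzH]; ring

theorem dX_log_lorenzH (h : 0 < lorenzH c x y z) :
    dX (fun x y z => log (lorenzH c x y z)) x y z = 2 * x / lorenzH c x y z := by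
  have h' := deriv_log_of_eq_sub_sq_add (lorenzH_eq_x_sq c y z) h
  rwa [sub_zero] at h'

theorem dY_log_lorenzH (h : 0 < lorenzH c x y z) :
    dY (fun x y z => log (lorenzH c x y z)) x y z = 2 * y / lorenzH c x y z := by
  have h' := deriv_log_of_eq_sub_sq_add (lorenzH_eq_y_sq c x z) h
  rwa [sub_zero] at h'

theorem dZ_log_lorenzH (h : 0 < lorenzH c x y z) :
    dZ (fun x y z => log (lorenzH c x y z)) x y z = 2 * (z - c) / lorenzH c x y z :=
  deriv_log_of_eq_sub_sq_add (lorenzH_eq_z_sub_sq c x y) h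

theorem dX_dX_log_lorenzH (h : 0 < lorenzH c x y z) :
    dX (dX fun x y z => log (lorenzH c x y z)) x y z =
      2 / lorenzH c x y z - 4 * x ^ 2 / lorenzH c x y z ^ 2 := by
  have h' := deriv_deriv_log_of_eq_sub_sq_add (lorenzH_eq_x_sq c y z) h
  rwa [sub_zero] at h'

theorem dY_dY_log_lorenzH (h : 0 < lorenzH c x y z) :
    dY (dY fun x y z => log (lorenzH c x y z)) x y z =
      2 / lorenzH c x y z - 4 * y ^ 2 / lorenzH c x y z ^ 2 := by
  have h' := deriv_deriv_log_of_eq_sub_sq_add (lorenzH_eq_y_sq c x z) h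
  rwa [sub_zero] at h'

theorem dZ_dZ_log_lorenzH (h : 0 < lorenzH c x y z) :
    dZ (dZ fun x y z => log (lorenzH c x y z)) x y z =
      2 / lorenzH c x y z - 4 * (z - c) ^ 2 / lorenzH c x y z ^ 2 :=
  deriv_deriv_log_of_eq_sub_sq_add (lorenzH_eq_z_sub_sq c x y) h

theorem lorenzGen_log_lorenzH (σ ρ β γ1 γ2 γ3 : ℝ) (h : 0 < lorenzH (σ + ρ) x y z) :
    lorenzGen σ ρ β γ1 γ2 γ3 (fun x y z => log (lorenzH (σ + ρ) x y z)) x y z =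
      (2 * -β * z ^ 2 - 2 * y ^ 2 - 2 * σ * x ^ 2 - 2 * -β * (σ + ρ) * z +
          2 * (γ1 + γ2 + γ3)) / lorenzH (σ + ρ) x y z -
        4 * (x ^ 2 * γ1 + y ^ 2 * γ2 + (z - (σ + ρ)) ^ 2 * γ3) / lorenzH (σ + ρ) x y z ^ 2 := by
  rw [lorenzGen, dX_log_lorenzH h, dY_log_lorenzH h, dZ_log_lorenzH h, dX_dX_log_lorenzH h,
    dY_dY_log_lorenzH h, dZ_dZ_log_lorenzH h]
  field_simp
  ring

theorem quadratic_div_lorenzH_le {σ β Γ : ℝ} (hσ : 0 ≤ σ) (hβ : β ≤ 0) (hΓ : 0 ≤ Γ)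
    (h : 1 ≤ lorenzH c x y z) :
    (2 * -β * z ^ 2 - 2 * y ^ 2 - 2 * σ * x ^ 2 - 2 * -β * c * z + 2 * Γ) / lorenzH c x y z ≤
      -β * (4 + 9 / 2 * c ^ 2) + 2 * Γ := by
  rw [div_le_iff₀ (one_pos.trans_le h)]
  have hb : 0 ≤ -β := neg_nonneg.2 hβ
  have hconst : 0 ≤ (-β * (9 / 2 * c ^ 2) + 2 * Γ) * (lorenzH c x y z - 1) :=
    mul_nonneg (by positivity) (by linarith)
  rw [lorenzH] at hconst ⊢
  -- the difference of the two sides is `hconst - 4β(x² + y²) - 2β(z - 3c/2)² + 2y² + 2σx²`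
  nlinarith [mul_nonneg hb (sq_nonneg x), mul_nonneg hb (sq_nonneg y),
    mul_nonneg hb (sq_nonneg (z - 3 * c / 2)), mul_nonneg hσ (sq_nonneg x), sq_nonneg y]

end LogLorenzH

theorem log_H_generator_bounded_general (σ ρ β γ1 γ2 γ3 : ℝ)
    (hσ : 0 < σ) (hβ : β < 0)
    (hγ1 : 0 ≤ γ1) (hγ2 : 0 ≤ γ2) (hγ3 : 0 ≤ γ3) :
    (∀ x y z : ℝ,
      1 < x ^ 2 + y ^ 2 + z ^ 2 - 2 * (σ + ρ) * z →
      lorenzGen σ ρ β γ1 γ2 γ3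
        (fun x y z => Real.log (x ^ 2 + y ^ 2 + z ^ 2 - 2 * (σ + ρ) * z))
        x y z =
        (2 * |β| * z ^ 2 - 2 * y ^ 2 - 2 * σ * x ^ 2 -
          2 * |β| * (σ + ρ) * z + 2 * (γ1 + γ2 + γ3)) /
            (x ^ 2 + y ^ 2 + z ^ 2 - 2 * (σ + ρ) * z) -
          4 * (x ^ 2 * γ1 + y ^ 2 * γ2 + (z - (σ + ρ)) ^ 2 * γ3) /
            (x ^ 2 + y ^ 2 + z ^ 2 - 2 * (σ + ρ) * z) ^ 2) ∧
    ∃ K : ℝ, 0 < K ∧ ∀ x y z : ℝ,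
      1 < x ^ 2 + y ^ 2 + z ^ 2 - 2 * (σ + ρ) * z →
      lorenzGen σ ρ β γ1 γ2 γ3
        (fun x y z => Real.log (x ^ 2 + y ^ 2 + z ^ 2 - 2 * (σ + ρ) * z))
        x y z ≤ K := by
  refine ⟨fun x y z h => abs_of_neg hβ ▸ lorenzGen_log_lorenzH σ ρ β γ1 γ2 γ3 (one_pos.trans h),
    -β * (4 + 9 / 2 * (σ + ρ) ^ 2) + 2 * (γ1 + γ2 + γ3),
    add_pos_of_pos_of_nonneg (mul_pos (neg_pos.2 hβ) (by positivity)) (by positivity),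
    fun x y z h => ?_⟩
  have hcorr : 0 ≤ 4 * (x ^ 2 * γ1 + y ^ 2 * γ2 + (z - (σ + ρ)) ^ 2 * γ3) /
      lorenzH (σ + ρ) x y z ^ 2 := by positivity
  have hquad := quadratic_div_lorenzH_le hσ.le hβ.le (by positivity : 0 ≤ γ1 + γ2 + γ3) h.le
  exact (lorenzGen_log_lorenzH σ ρ β γ1 γ2 γ3 (one_pos.trans h)).trans_le (by linarith)

/-- with `H(x,y,z) = x²+y²+z²−2(σ+ρ)z` and `W₂ = ln H` on
`{H > 1}`, for the Lorenz generator with `β < 0`,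
`LW₂ = [2|β|z² − 2y² − 2σx² − 2|β|(σ+ρ)z + 2(γ₁+γ₂+γ₃)]/H
  − 4[x²γ₁ + y²γ₂ + (z−(σ+ρ))²γ₃]/H²`, and there is `K > 0` with
`LW₂ ≤ K` on `{H > 1}`. -/
theorem log_H_generator_bounded (σ ρ β γ1 γ2 γ3 : ℝ)
    (hσ : 0 < σ) (hρ : 0 ≤ ρ) (hβ : β < 0)
    (hγ1 : 0 ≤ γ1) (hγ2 : 0 ≤ γ2) (hγ3 : 0 ≤ γ3) :
    (∀ x y z : ℝ,
      1 < x ^ 2 + y ^ 2 + z ^ 2 - 2 * (σ + ρ) * z →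
      lorenzGen σ ρ β γ1 γ2 γ3
        (fun x y z => Real.log (x ^ 2 + y ^ 2 + z ^ 2 - 2 * (σ + ρ) * z))
        x y z =
        (2 * |β| * z ^ 2 - 2 * y ^ 2 - 2 * σ * x ^ 2 -
          2 * |β| * (σ + ρ) * z + 2 * (γ1 + γ2 + γ3)) /
            (x ^ 2 + y ^ 2 + z ^ 2 - 2 * (σ + ρ) * z) -
          4 * (x ^ 2 * γ1 + y ^ 2 * γ2 + (z - (σ + ρ)) ^ 2 * γ3) /
            (x ^ 2 + y ^ 2 + z ^ 2 - 2 * (σ + ρ) * z) ^ 2) ∧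
    ∃ K : ℝ, 0 < K ∧ ∀ x y z : ℝ,
      1 < x ^ 2 + y ^ 2 + z ^ 2 - 2 * (σ + ρ) * z →
      lorenzGen σ ρ β γ1 γ2 γ3
        (fun x y z => Real.log (x ^ 2 + y ^ 2 + z ^ 2 - 2 * (σ + ρ) * z))
        x y z ≤ K :=
  log_H_generator_bounded_general σ ρ β γ1 γ2 γ3 hσ hβ hγ1 hγ2 hγ3
end
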